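/- For a collection of objects S in an abelian category A and any n ≥ 1, the subcategory th^n(S) (the n-th step of the thick filtration in A) is contained in the triangulated building subcategory ⟨S⟩_{2^{n-1}} inside the bounded derived category D^b(A). -/

import Mathlib

open CategoryTheory CategoryTheory.Limits CategoryTheory.Pretriangulated

universe w v u

variable {C : Type u} [Category.{v} C] [Abelian C]

/-- `X` is a retract (direct summand) of `B`. -/
def IsRetract {D : Type*} [Category D] (X B : D) : Prop :=
  ∃ (s : X ⟶ B) (r : B ⟶ X), s ≫ r = 𝟙 X

instance (priority := 100) : HasFiniteBiproducts C :=
  HasFiniteBiproducts.of_hasFiniteProducts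

/-- `add S`: direct summands of finite coproducts of objects of `S`
in an abelian category. -/
def addHull (S : Set C) : Set C :=
  {X | ∃ (n : ℕ) (f : Fin n → C), (∀ i, f i ∈ S) ∧ IsRetract X (⨁ f)}

/-- The filtration `th^n(S)` of the thick closure of `S` in an abelian category:
`th^0(S)` consists of zero objects, `th^1(S) = add(S)`, and `th^n(S)` consists of
direct summands of objects appearing in a short exact sequence whose two other
terms lie in `th^{n-1}(S)`. -/
def thStep (S : Set C) : ℕ → Set C
  | 0 => {X | IsZero X}
  | 1 => addHull S
  | n + 2 => {X | ∃ SC : ShortComplex C, SC.ShortExact ∧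
      ((IsRetract X SC.X₁ ∧ SC.X₂ ∈ thStep S (n + 1) ∧ SC.X₃ ∈ thStep S (n + 1)) ∨
       (IsRetract X SC.X₂ ∧ SC.X₁ ∈ thStep S (n + 1) ∧ SC.X₃ ∈ thStep S (n + 1)) ∨
       (IsRetract X SC.X₃ ∧ SC.X₁ ∈ thStep S (n + 1) ∧ SC.X₂ ∈ thStep S (n + 1)))}

section Triangulated

variable {D : Type*} [Category D] [HasZeroObject D] [Preadditive D]
  [HasShift D ℤ] [∀ n : ℤ, (shiftFunctor D n).Additive] [Pretriangulated D]

/-- `⟨S⟩₁ = add(S)`: retracts of finite coproducts of shifts of objects of `S`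
in a triangulated category. -/
def tAddHull (S : Set D) : Set D :=
  {X | ∃ (n : ℕ) (f : Fin n → D) (k : Fin n → ℤ), (∀ i, f i ∈ S) ∧
    IsRetract X (⨁ fun i => (f i)⟦k i⟧)}

/-- The building subcategories `⟨S⟩_n` of a triangulated category:
`⟨S⟩₀` consists of zero objects, `⟨S⟩₁ = add(S)`, and
`⟨S⟩_n = add {cone(φ) : φ ∈ Hom(⟨S⟩_{n-1}, ⟨S⟩₁)}`. -/
def tBuild (S : Set D) : ℕ → Set D
  | 0 => {X | IsZero X}
  | 1 => tAddHull S
  | n + 2 => tAddHull {Z | ∃ (X Y : D) (φ : X ⟶ Y) (g : Y ⟶ Z) (h : Z ⟶ X⟦(1 : ℤ)⟧),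
      X ∈ tBuild S (n + 1) ∧ Y ∈ tAddHull S ∧ Triangle.mk φ g h ∈ (distTriang D)}

end Triangulated

/-! ### Auxiliary lemmas -/

section RetractLemmas

variable {E : Type*} [Category E]

lemma IsRetract.refl' (X : E) : IsRetract X X := ⟨𝟙 X, 𝟙 X, by simp⟩

lemma IsRetract.trans' {X Y Z : E} (h₁ : IsRetract X Y) (h₂ : IsRetract Y Z) : IsRetract X Z := by
  obtain ⟨s, r, hsr⟩ := h₁
  obtain ⟨s', r', hsr'⟩ := h₂
  exact ⟨s ≫ s', r' ≫ r, by
    rw [Category.assoc, ← Category.assoc s', hsr', Category.id_comp, hsr]⟩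

lemma isRetract_of_iso {X Y : E} (e : X ≅ Y) : IsRetract X Y :=
  ⟨e.hom, e.inv, e.hom_inv_id⟩

lemma IsRetract.of_iso_right {X Y Z : E} (h : IsRetract X Y) (e : Y ≅ Z) : IsRetract X Z :=
  h.trans' (isRetract_of_iso e)

lemma IsRetract.map {E' : Type*} [Category E'] {X Y : E} (h : IsRetract X Y) (F : E ⥤ E') :
    IsRetract (F.obj X) (F.obj Y) := by
  obtain ⟨s, r, hsr⟩ := h
  exact ⟨F.map s, F.map r, by rw [← F.map_comp, hsr, F.map_id]⟩

lemma IsRetract.isZero {X Y : E} [Limits.HasZeroMorphisms E] (h : IsRetract X Y)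
    (hY : Limits.IsZero Y) : Limits.IsZero X := by
  obtain ⟨s, r, hsr⟩ := h
  rw [Limits.IsZero.iff_id_eq_zero]
  rw [← hsr, hY.eq_of_src r 0, Limits.comp_zero]

end RetractLemmas

section DTLemmas
open ZeroObject

variable {D : Type*} [Category D] [HasZeroObject D] [Preadditive D]
  [HasShift D ℤ] [∀ n : ℤ, (shiftFunctor D n).Additive] [Pretriangulated D]

/-- There exists a distinguished triangle `A ⟶ B ⟶ C ⟶ A⟦1⟧`. -/
def DT (A B C : D) : Prop :=
  ∃ (φ : A ⟶ B) (g : B ⟶ C) (h : C ⟶ A⟦(1 : ℤ)⟧), Triangle.mk φ g h ∈ distTriang D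

lemma DT.ofTriangle {T : Triangle D} (hT : T ∈ distTriang D) : DT T.obj₁ T.obj₂ T.obj₃ :=
  ⟨T.mor₁, T.mor₂, T.mor₃, hT⟩

lemma DT.iso {A B C A' B' C' : D} (h : DT A B C) (eA : A ≅ A') (eB : B ≅ B') (eC : C ≅ C') :
    DT A' B' C' := by
  obtain ⟨φ, g, hh, hT⟩ := h
  refine ⟨eA.inv ≫ φ ≫ eB.hom, eB.inv ≫ g ≫ eC.hom, eC.inv ≫ hh ≫ eA.hom⟦(1 : ℤ)⟧', ?_⟩
  refine isomorphic_distinguished _ hT _ ?_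
  refine Triangle.isoMk _ _ eA.symm eB.symm eC.symm ?_ ?_ ?_
  · show (eA.inv ≫ φ ≫ eB.hom) ≫ eB.inv = eA.inv ≫ φ
    simp
  · show (eB.inv ≫ g ≫ eC.hom) ≫ eC.inv = eB.inv ≫ g
    simp
  · dsimp
    show (eC.inv ≫ hh ≫ eA.hom⟦(1 : ℤ)⟧') ≫ eA.inv⟦(1 : ℤ)⟧' = eC.inv ≫ hh
    simp only [Category.assoc, ← CategoryTheory.Functor.map_comp, Iso.hom_inv_id,
      CategoryTheory.Functor.map_id, Category.comp_id]

lemma DT.rot {A B C : D} (h : DT A B C) : DT B C (A⟦(1 : ℤ)⟧) := by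
  obtain ⟨φ, g, hh, hT⟩ := h
  exact DT.ofTriangle (rot_of_distTriang _ hT)

lemma DT.invRot {A B C : D} (h : DT A B C) : DT (C⟦(-1 : ℤ)⟧) A B := by
  obtain ⟨φ, g, hh, hT⟩ := h
  exact DT.ofTriangle (inv_rot_of_distTriang _ hT)

lemma DT.shift {A B C : D} (h : DT A B C) (k : ℤ) : DT (A⟦k⟧) (B⟦k⟧) (C⟦k⟧) := by
  obtain ⟨φ, g, hh, hT⟩ := h
  exact DT.ofTriangle (Triangle.shift_distinguished _ hT k)

lemma DT.contractible (W : D) : DT W W 0 :=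
  DT.ofTriangle (contractible_distinguished W)

lemma DT.sum {n : ℕ} (A B Cc : Fin n → D) (h : ∀ i, DT (A i) (B i) (Cc i)) :
    DT (⨁ A) (⨁ B) (⨁ Cc) := by
  choose φ g hh hT using h
  let T : Fin n → Triangle D := fun i => Triangle.mk (φ i) (g i) (hh i)
  have hPT := productTriangle_distinguished T (fun i => hT i)
  have hDT : DT (∏ᶜ fun i => (T i).obj₁) (∏ᶜ fun i => (T i).obj₂) (∏ᶜ fun i => (T i).obj₃) :=
    DT.ofTriangle hPT
  exact hDT.iso (biproduct.isoProduct A).symm (biproduct.isoProduct B).symm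
    (biproduct.isoProduct Cc).symm

/-- `⨁ F ≅ F 0 ⊞ F 1` for a family over `Fin 2`. -/
noncomputable def biproductFinTwoIso (F : Fin 2 → D) : (⨁ F) ≅ F 0 ⊞ F 1 where
  hom := biprod.lift (biproduct.π F 0) (biproduct.π F 1)
  inv := biprod.desc (biproduct.ι F 0) (biproduct.ι F 1)
  hom_inv_id := by
    rw [biprod.lift_desc, ← biproduct.total, Fin.sum_univ_two]
  inv_hom_id := by
    ext
    · simp
    · simp [biproduct.ι_π_ne _ (show (0 : Fin 2) ≠ 1 by decide)]
    · simp [biproduct.ι_π_ne _ (show (1 : Fin 2) ≠ 0 by decide)]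
    · simp

lemma DT.pair {A B C A' B' C' : D} (h : DT A B C) (h' : DT A' B' C') :
    DT (A ⊞ A') (B ⊞ B') (C ⊞ C') := by
  have hs := DT.sum ![A, A'] ![B, B'] ![C, C'] (fun i => by
    fin_cases i
    · exact h
    · exact h')
  exact hs.iso (biproductFinTwoIso _) (biproductFinTwoIso _) (biproductFinTwoIso _)

/-- `C ⊞ 0 ≅ C`. -/
noncomputable def biprodZeroIso (X : D) : X ⊞ (0 : D) ≅ X where
  hom := biprod.fst
  inv := biprod.lift (𝟙 X) 0
  hom_inv_id := by
    apply biprod.hom_ext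
    · simp
    · exact (Limits.isZero_zero D).eq_of_tgt _ _
  inv_hom_id := by simp

/-- A retract in a pretriangulated category is a direct summand. -/
lemma exists_biprod_of_isRetract {X A : D} (h : IsRetract X A) :
    ∃ (W : D), Nonempty (A ≅ X ⊞ W) := by
  obtain ⟨s, r, hsr⟩ := h
  obtain ⟨Z, g, hh, hT⟩ := distinguished_cocone_triangle s
  have hzero : (Triangle.mk s g hh).mor₃ = 0 := by
    have h31 := comp_distTriang_mor_zero₃₁ _ hT
    change hh ≫ s⟦(1 : ℤ)⟧' = 0 at h31
    change hh = 0
    calc hh = hh ≫ (s ≫ r)⟦(1 : ℤ)⟧' := by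
            rw [hsr, CategoryTheory.Functor.map_id, Category.comp_id]
    _ = (hh ≫ s⟦(1 : ℤ)⟧') ≫ r⟦(1 : ℤ)⟧' := by
            rw [CategoryTheory.Functor.map_comp, Category.assoc]
    _ = 0 := by rw [h31, Limits.zero_comp]
  obtain ⟨e, _, _⟩ := exists_iso_binaryBiproduct_of_distTriang _ hT hzero
  exact ⟨Z, ⟨e⟩⟩

end DTLemmas

section HullLemmas
open ZeroObject

variable {D : Type*} [Category D] [HasZeroObject D] [Preadditive D]
  [HasShift D ℤ] [∀ n : ℤ, (shiftFunctor D n).Additive] [Pretriangulated D]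

variable (P S : Set D)

lemma tAddHull_retract {X Y : D} (h : IsRetract X Y) (hY : Y ∈ tAddHull P) : X ∈ tAddHull P := by
  obtain ⟨n, f, k, hf, hr⟩ := hY
  exact ⟨n, f, k, hf, h.trans' hr⟩

lemma tAddHull_iso {X Y : D} (e : X ≅ Y) (hY : Y ∈ tAddHull P) : X ∈ tAddHull P :=
  tAddHull_retract P (isRetract_of_iso e) hY

lemma mem_tAddHull {X : D} (hX : X ∈ P) : X ∈ tAddHull P := by
  refine ⟨1, fun _ => X, fun _ => 0, fun _ => hX,
    (shiftFunctorZero D ℤ).inv.app X ≫ biproduct.ι (fun _ : Fin 1 => X⟦(0 : ℤ)⟧) (0 : Fin 1),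
    biproduct.π (fun _ : Fin 1 => X⟦(0 : ℤ)⟧) (0 : Fin 1) ≫ (shiftFunctorZero D ℤ).hom.app X, ?_⟩
  rw [Category.assoc, biproduct.ι_π_self_assoc]
  simp

lemma isZero_mem_tAddHull {X : D} (hX : Limits.IsZero X) : X ∈ tAddHull P :=
  ⟨0, Fin.elim0, Fin.elim0, fun i => i.elim0, 0, 0, (hX.eq_of_src _ _)⟩

lemma tAddHull_shift {X : D} (hX : X ∈ tAddHull P) (m : ℤ) : X⟦m⟧ ∈ tAddHull P := by
  obtain ⟨n, f, k, hf, hr⟩ := hX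
  refine ⟨n, f, fun i => k i + m, hf, ?_⟩
  have h1 : IsRetract (X⟦m⟧) ((⨁ fun i => (f i)⟦k i⟧)⟦m⟧) := hr.map (shiftFunctor D m)
  exact h1.of_iso_right (((shiftFunctor D m).mapBiproduct _) ≪≫
    biproduct.mapIso (fun i => ((shiftFunctorAdd D (k i) m).app (f i)).symm))

lemma tAddHull_biproduct {N : ℕ} (g : Fin N → D) (hg : ∀ j, g j ∈ tAddHull P) :
    (⨁ g) ∈ tAddHull P := by
  choose n ff k hf s r hsr using hg
  have hret : IsRetract (⨁ g) (⨁ fun j => ⨁ fun i => (ff j i)⟦k j i⟧) := by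
    refine ⟨biproduct.map s, biproduct.map r, ?_⟩
    ext j
    simp [hsr]
  have e1 : (⨁ fun j => ⨁ fun i => (ff j i)⟦k j i⟧) ≅
      ⨁ (fun p : Σ j : Fin N, Fin (n j) => (ff p.1 p.2)⟦k p.1 p.2⟧) :=
    biproductBiproductIso _ _
  let e := Fintype.equivFin (Σ j : Fin N, Fin (n j))
  have e2 : (⨁ (fun p : Σ j : Fin N, Fin (n j) => (ff p.1 p.2)⟦k p.1 p.2⟧)) ≅
      ⨁ (fun x : Fin (Fintype.card (Σ j : Fin N, Fin (n j))) =>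
        (ff (e.symm x).1 (e.symm x).2)⟦k (e.symm x).1 (e.symm x).2⟧) :=
    biproduct.whiskerEquiv e (fun p => eqToIso (by rw [Equiv.symm_apply_apply]))
  exact ⟨_, fun x => ff (e.symm x).1 (e.symm x).2, fun x => k (e.symm x).1 (e.symm x).2,
    fun x => hf _ _, hret.of_iso_right (e1 ≪≫ e2)⟩

lemma tBuild_one_eq : tBuild S 1 = tAddHull S := rfl

lemma tBuild_two_eq (n : ℕ) : tBuild S (n + 2) =
    tAddHull {Z | ∃ (X Y : D) (φ : X ⟶ Y) (g : Y ⟶ Z) (h : Z ⟶ X⟦(1 : ℤ)⟧),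
      X ∈ tBuild S (n + 1) ∧ Y ∈ tAddHull S ∧ Triangle.mk φ g h ∈ (distTriang D)} := rfl

lemma tBuild_retract (m : ℕ) {X Y : D} (h : IsRetract X Y) (hY : Y ∈ tBuild S m) :
    X ∈ tBuild S m := by
  match m with
  | 0 => exact h.isZero hY
  | 1 => exact tAddHull_retract _ h hY
  | (n + 2) => exact tAddHull_retract _ h hY

lemma tBuild_iso (m : ℕ) {X Y : D} (e : X ≅ Y) (hY : Y ∈ tBuild S m) : X ∈ tBuild S m :=
  tBuild_retract S m (isRetract_of_iso e) hY

lemma tBuild_shift (m : ℕ) {X : D} (hX : X ∈ tBuild S m) (k : ℤ) : X⟦k⟧ ∈ tBuild S m := by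
  match m with
  | 0 =>
    have hX' : Limits.IsZero X := hX
    show Limits.IsZero (X⟦k⟧)
    rw [Limits.IsZero.iff_id_eq_zero]
    rw [← CategoryTheory.Functor.map_id, hX'.eq_of_src (𝟙 X) 0, Functor.map_zero]
  | 1 => exact tAddHull_shift _ hX k
  | (n + 2) => exact tAddHull_shift _ hX k

lemma tBuild_biproduct_shift (m : ℕ) {N : ℕ} (g : Fin N → D) (k : Fin N → ℤ)
    (hg : ∀ j, g j ∈ tBuild S m) : (⨁ fun j => (g j)⟦k j⟧) ∈ tBuild S m := by
  match m with
  | 0 =>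
    show Limits.IsZero (⨁ fun j => (g j)⟦k j⟧)
    rw [Limits.IsZero.iff_id_eq_zero]
    apply biproduct.hom_ext
    intro j
    have hz : Limits.IsZero ((g j)⟦k j⟧) := by
      have h0 : Limits.IsZero (g j) := hg j
      rw [Limits.IsZero.iff_id_eq_zero, ← CategoryTheory.Functor.map_id,
        h0.eq_of_src (𝟙 (g j)) 0, Functor.map_zero]
    exact hz.eq_of_tgt _ _
  | 1 => exact tAddHull_biproduct _ _ (fun j => tAddHull_shift _ (hg j) (k j))
  | (n + 2) => exact tAddHull_biproduct _ _ (fun j => tAddHull_shift _ (hg j) (k j))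

lemma tBuild_cone (n : ℕ) {A B C' : D} (h : DT A B C') (hA : A ∈ tBuild S (n + 1))
    (hB : B ∈ tAddHull S) : C' ∈ tBuild S (n + 2) := by
  obtain ⟨φ, g, hh, hT⟩ := h
  rw [tBuild_two_eq]
  exact mem_tAddHull _ ⟨A, B, φ, g, hh, hA, hB, hT⟩

lemma tBuild_mono_succ (m : ℕ) {X : D} (hX : X ∈ tBuild S m) : X ∈ tBuild S (m + 1) := by
  match m with
  | 0 => exact isZero_mem_tAddHull _ hX
  | (n + 1) =>
    have h1 : DT X (0 : D) (X⟦(1 : ℤ)⟧) := (DT.contractible X).rot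
    have h2 : X⟦(1 : ℤ)⟧ ∈ tBuild S (n + 2) :=
      tBuild_cone S n h1 hX (isZero_mem_tAddHull _ (Limits.isZero_zero D))
    have h3 := tBuild_shift S (n + 2) h2 (-1 : ℤ)
    exact tBuild_iso S (n + 2)
      ((shiftFunctorCompIsoId D (1 : ℤ) (-1 : ℤ) (by ring)).symm.app X) h3

lemma tBuild_mono {m m' : ℕ} (h : m ≤ m') {X : D} (hX : X ∈ tBuild S m) : X ∈ tBuild S m' := by
  induction m' with
  | zero => simpa [Nat.le_zero.mp h] using hX
  | succ k ih =>
    rcases Nat.lt_or_ge m (k + 1) with hlt | hge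
    · exact tBuild_mono_succ S k (ih (by omega))
    · have : m = k + 1 := by omega
      subst this
      exact hX

/-- The key gluing lemma: if there is a distinguished triangle `A ⟶ B ⟶ C'`,
with `A ∈ ⟨S⟩ₐ` and `C' ∈ ⟨S⟩_c`, then `B ∈ ⟨S⟩_{a+c}`. -/
lemma tBuild_glue [IsTriangulated D] :
    ∀ (a' : ℕ) {c : ℕ}, 1 ≤ c → ∀ {A B C' : D}, DT A B C' →
      A ∈ tBuild S (a' + 1) → C' ∈ tBuild S c → B ∈ tBuild S (a' + 1 + c) := by
  intro a'
  induction a' with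
  | zero =>
    intro c hc A B C' h hA hC
    obtain ⟨c', rfl⟩ : ∃ c', c = c' + 1 := ⟨c - 1, by omega⟩
    have h2 : DT (C'⟦(-1 : ℤ)⟧) A B := h.invRot
    have h3 := tBuild_cone S c' h2 (tBuild_shift S (c' + 1) hC (-1)) hA
    have e : 0 + 1 + (c' + 1) = c' + 2 := by omega
    rw [e]
    exact h3
  | succ a' IH =>
    intro c hc A B C' h hA hC
    rw [show a' + 1 + 1 = a' + 2 from rfl, tBuild_two_eq] at hA
    obtain ⟨m, ff, k, hf, hr⟩ := hA
    choose U V φ g hh hU hV hdist using hf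
    have hsum : DT (⨁ fun i => (U i)⟦k i⟧) (⨁ fun i => (V i)⟦k i⟧)
        (⨁ fun i => (ff i)⟦k i⟧) :=
      DT.sum _ _ _ (fun i => DT.shift ⟨φ i, g i, hh i, hdist i⟩ (k i))
    obtain ⟨W, ⟨eW⟩⟩ := exists_biprod_of_isRetract hr
    have hpair : DT (A ⊞ W) (B ⊞ W) (C' ⊞ (0 : D)) := h.pair (DT.contractible W)
    have hT2 : DT (⨁ fun i => (ff i)⟦k i⟧) (B ⊞ W) C' :=
      hpair.iso eW.symm (Iso.refl _) (biprodZeroIso C')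
    -- octahedron
    obtain ⟨u₁₂, v₁₂, w₁₂, h₁₂⟩ := hsum.rot
    obtain ⟨u₂₃, v₂₃, w₂₃, h₂₃⟩ := hT2
    obtain ⟨M, v₁₃, w₁₃, h₁₃⟩ := distinguished_cocone_triangle (u₁₂ ≫ u₂₃)
    have oct := Triangulated.someOctahedron rfl h₁₂ h₂₃ h₁₃
    have hMDT : DT ((⨁ fun i => (U i)⟦k i⟧)⟦(1 : ℤ)⟧) M C' := ⟨_, _, _, oct.mem⟩
    have hUsum : (⨁ fun i => (U i)⟦k i⟧) ∈ tBuild S (a' + 1) :=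
      tBuild_biproduct_shift S (a' + 1) U k hU
    have hM : M ∈ tBuild S (a' + 1 + c) :=
      IH hc hMDT (tBuild_shift S (a' + 1) hUsum 1) hC
    have hVsum : (⨁ fun i => (V i)⟦k i⟧) ∈ tAddHull S :=
      tAddHull_biproduct S _ (fun i => tAddHull_shift S (hV i) (k i))
    have hfin : DT (M⟦(-1 : ℤ)⟧) (⨁ fun i => (V i)⟦k i⟧) (B ⊞ W) :=
      DT.invRot ⟨u₁₂ ≫ u₂₃, v₁₃, w₁₃, h₁₃⟩
    obtain ⟨d, hd⟩ : ∃ d, a' + 1 + c = d + 1 := ⟨a' + c, by omega⟩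
    have hBW : (B ⊞ W) ∈ tBuild S (d + 2) :=
      tBuild_cone S d hfin (tBuild_shift S (d + 1) (by rwa [hd] at hM) (-1)) hVsum
    have e : a' + 1 + 1 + c = d + 2 := by omega
    rw [e]
    exact tBuild_retract S (d + 2) ⟨biprod.inl, biprod.fst, by simp⟩ hBW

lemma tBuild_glue' [IsTriangulated D] {a c : ℕ} (ha : 1 ≤ a) (hc : 1 ≤ c) {A B C' : D}
    (h : DT A B C') (hA : A ∈ tBuild S a) (hC : C' ∈ tBuild S c) : B ∈ tBuild S (a + c) := by
  obtain ⟨a', rfl⟩ : ∃ a', a = a' + 1 := ⟨a - 1, by omega⟩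
  exact tBuild_glue S a' hc h hA hC

end HullLemmas

/-! ### The main theorem -/

lemma thStep_subset_tBuild_aux [HasDerivedCategory.{w} C] (S : Set C) (m : ℕ) :
    (DerivedCategory.singleFunctor C 0).obj '' thStep S (m + 1) ⊆
      tBuild ((DerivedCategory.singleFunctor C 0).obj '' S) (2 ^ m) := by
  induction m with
  | zero =>
    rintro _ ⟨X, hX, rfl⟩
    obtain ⟨nn, f, hfS, hret⟩ := hX
    have h1 : IsRetract ((DerivedCategory.singleFunctor C 0).obj X)
        ((DerivedCategory.singleFunctor C 0).obj (⨁ f)) :=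
      hret.map _
    have h2 : (DerivedCategory.singleFunctor C 0).obj (⨁ f) ≅
        ⨁ (fun i => (DerivedCategory.singleFunctor C 0).obj (f i)) :=
      (DerivedCategory.singleFunctor C 0).mapBiproduct f
    have h3 : (⨁ fun i => (DerivedCategory.singleFunctor C 0).obj (f i)) ∈
        tAddHull ((DerivedCategory.singleFunctor C 0).obj '' S) :=
      tAddHull_biproduct _ _ (fun i => mem_tAddHull _ (Set.mem_image_of_mem _ (hfS i)))
    rw [pow_zero]
    exact tAddHull_retract _ (h1.of_iso_right h2) h3
  | succ m IH =>
    rintro _ ⟨X, hX, rfl⟩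
    obtain ⟨SC, hSE, hcase⟩ := hX
    set F := DerivedCategory.singleFunctor C 0 with hF
    set T := F.obj '' S with hT
    have hDT : DT (F.obj SC.X₁) (F.obj SC.X₂) (F.obj SC.X₃) :=
      ⟨F.map SC.f, F.map SC.g, hSE.singleδ, hSE.singleTriangle_distinguished⟩
    have hpow : (1 : ℕ) ≤ 2 ^ m := Nat.one_le_two_pow
    have hgoal : 2 ^ (m + 1) = 2 ^ m + 2 ^ m := by rw [pow_succ, Nat.mul_two]
    rw [hgoal]
    rcases hcase with ⟨hret, h₂, h₃⟩ | ⟨hret, h₁, h₃⟩ | ⟨hret, h₁, h₂⟩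
    · -- retract of X₁
      have hFX₂ : F.obj SC.X₂ ∈ tBuild T (2 ^ m) := IH (Set.mem_image_of_mem _ h₂)
      have hFX₃ : F.obj SC.X₃ ∈ tBuild T (2 ^ m) := IH (Set.mem_image_of_mem _ h₃)
      have h' : DT ((F.obj SC.X₃)⟦(-1 : ℤ)⟧) (F.obj SC.X₁) (F.obj SC.X₂) := hDT.invRot
      have := tBuild_glue' T hpow hpow h' (tBuild_shift T _ hFX₃ (-1)) hFX₂
      exact tBuild_retract T _ (hret.map F) this
    · -- retract of X₂
      have hFX₁ : F.obj SC.X₁ ∈ tBuild T (2 ^ m) := IH (Set.mem_image_of_mem _ h₁)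
      have hFX₃ : F.obj SC.X₃ ∈ tBuild T (2 ^ m) := IH (Set.mem_image_of_mem _ h₃)
      have := tBuild_glue' T hpow hpow hDT hFX₁ hFX₃
      exact tBuild_retract T _ (hret.map F) this
    · -- retract of X₃
      have hFX₁ : F.obj SC.X₁ ∈ tBuild T (2 ^ m) := IH (Set.mem_image_of_mem _ h₁)
      have hFX₂ : F.obj SC.X₂ ∈ tBuild T (2 ^ m) := IH (Set.mem_image_of_mem _ h₂)
      have h' : DT (F.obj SC.X₂) (F.obj SC.X₃) ((F.obj SC.X₁)⟦(1 : ℤ)⟧) := hDT.rot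
      have := tBuild_glue' T hpow hpow h' hFX₂ (tBuild_shift T _ hFX₁ 1)
      exact tBuild_retract T _ (hret.map F) this

/-- For a collection of objects `S` in an abelian category `C` and any `n ≥ 1`, the
`n`-th step `th^n(S)` of the thick filtration in `C` is contained in the triangulated
building subcategory `⟨S⟩_{2^{n-1}}` inside the bounded derived category `D^b(C)`. -/
theorem thStep_subset_tBuild [HasDerivedCategory.{w} C] (S : Set C) (n : ℕ) (hn : 1 ≤ n) :
    (DerivedCategory.singleFunctor C 0).obj '' thStep S n ⊆
      tBuild ((DerivedCategory.singleFunctor C 0).obj '' S) (2 ^ (n - 1)) := by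
  obtain ⟨n', rfl⟩ : ∃ n', n = n' + 1 := ⟨n - 1, by omega⟩
  rw [Nat.add_sub_cancel]
  exact thStep_subset_tBuild_aux S n'
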